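/- arXiv:2412.00717 — 3 statements merged into one kernel-verified Lean document; each statement's English description precedes it below -/
import Mathlib

section
/- Let X ~ Bin(r, c·q) and X' ~ Bin(r, q) for c ∈ [0,1], and let X1,...,Xk be i.i.d. copies of X and X'1,...,X'k i.i.d. copies of X'. Then E[max_i Xi] ≥ c · E[max_i X'i]. -/
/-!
Thin each `Bin(r, q)` variable by keeping each of its successes independently with probability
`c`. The thinned variables are i.i.d. `Bin(r, c q)`. Conditionally on an outcome `g` of the
originals, the thinned copy of a coordinate `i₀` at which `g` is maximal has mean `c · max g`, and
the maximum of the thinned variables dominates that copy; averaging over `g` gives the claim.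
-/

/-- Probability mass function of a Binomial(n, p) random variable at value `j`. -/
def binomPMF (n : ℕ) (p : ℝ) (j : ℕ) : ℝ :=
  (n.choose j : ℝ) * p ^ j * (1 - p) ^ (n - j)

/-- `E[max_{i ∈ [k]} Bᵢ]` for `B₁, …, B_k` i.i.d. `Bin(n, p)` random variables. -/
noncomputable def binomMaxExp (k n : ℕ) (p : ℝ) : ℝ :=
  ∑ f : Fin k → Fin (n + 1),
    (∏ i, binomPMF n p (f i)) * (((Finset.univ.sup fun i => (f i : ℕ)) : ℕ) : ℝ)

open Finset

section ProductExpectation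

variable {ι β : Type*} [Fintype ι] [DecidableEq ι] [Fintype β]

theorem sum_prod_mul_apply {R : Type*} [CommSemiring R] (w : ι → β → R) {i₀ : ι}
    (hw : ∀ i ≠ i₀, ∑ b, w i b = 1) (x : β → R) :
    ∑ f : ι → β, (∏ i, w i (f i)) * x (f i₀) = ∑ b, w i₀ b * x b := by
  -- absorbing `x (f i₀)` into the `i₀`-th factor makes the sum over `f` factorize
  have hprod : ∀ f : ι → β,
      (∏ i, w i (f i)) * x (f i₀) = ∏ i, w i (f i) * if i = i₀ then x (f i) else 1 := by
    intro f
    rw [prod_mul_distrib, Fintype.prod_ite_eq']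
  rw [sum_congr rfl fun f _ => hprod f,
    ← Fintype.prod_sum fun i b => w i b * if i = i₀ then x b else 1,
    ← Fintype.prod_ite_eq' i₀ fun i => ∑ b, w i b * x b]
  refine prod_congr rfl fun i _ => ?_
  split_ifs with hi
  · rfl
  · simpa only [mul_one] using hw i hi

theorem sum_mul_le_sum_prod_mul_sup (w : ι → β → ℝ) (hw0 : ∀ i b, 0 ≤ w i b) {i₀ : ι}
    (hw : ∀ i ≠ i₀, ∑ b, w i b = 1) (x : β → ℕ) :
    ∑ b, w i₀ b * x b ≤
      ∑ f : ι → β, (∏ i, w i (f i)) * ((univ.sup fun i => x (f i) : ℕ) : ℝ) := by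
  rw [← sum_prod_mul_apply w hw]
  gcongr with f
  · exact prod_nonneg fun i _ => hw0 i (f i)
  · exact le_sup (f := fun i => x (f i)) (mem_univ i₀)

end ProductExpectation

theorem binomPMF_nonneg {p : ℝ} (hp0 : 0 ≤ p) (hp1 : p ≤ 1) (n j : ℕ) :
    0 ≤ binomPMF n p j := by
  unfold binomPMF
  have : 0 ≤ 1 - p := sub_nonneg.2 hp1
  positivity

theorem binomPMF_eq_zero_of_lt {n j : ℕ} (p : ℝ) (h : n < j) : binomPMF n p j = 0 := by
  simp [binomPMF, Nat.choose_eq_zero_of_lt h]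

theorem binomPMF_eq_eval_bernsteinPolynomial (n j : ℕ) (p : ℝ) :
    binomPMF n p j = (bernsteinPolynomial ℝ n j).eval p := by
  simp [binomPMF, bernsteinPolynomial]

theorem sum_fin_binomPMF_mul_eq_sum_range {m r : ℕ} (hm : m ≤ r) (p : ℝ) (x : ℕ → ℝ) :
    ∑ j : Fin (r + 1), binomPMF m p j * x j = ∑ j ∈ range (m + 1), binomPMF m p j * x j := by
  rw [Fin.sum_univ_eq_sum_range (fun j => binomPMF m p j * x j)]
  refine (sum_subset (range_subset_range.2 (by omega)) fun j _ hj => ?_).symm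
  rw [binomPMF_eq_zero_of_lt p (by simpa using hj), zero_mul]

theorem sum_range_binomPMF (n : ℕ) (p : ℝ) : ∑ j ∈ range (n + 1), binomPMF n p j = 1 := by
  simpa only [Polynomial.eval_finsetSum, ← binomPMF_eq_eval_bernsteinPolynomial,
    Polynomial.eval_one] using congrArg (Polynomial.eval p) (bernsteinPolynomial.sum ℝ n)

theorem sum_range_binomPMF_mul_self (n : ℕ) (p : ℝ) :
    ∑ j ∈ range (n + 1), binomPMF n p j * j = n * p := by
  simpa only [Polynomial.eval_finsetSum, nsmul_eq_mul, Polynomial.eval_mul,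
    Polynomial.eval_natCast, Polynomial.eval_X, ← binomPMF_eq_eval_bernsteinPolynomial, mul_comm]
    using congrArg (Polynomial.eval p) (bernsteinPolynomial.sum_smul ℝ n)

theorem sum_fin_binomPMF {m r : ℕ} (hm : m ≤ r) (p : ℝ) :
    ∑ j : Fin (r + 1), binomPMF m p j = 1 := by
  simpa [sum_range_binomPMF] using sum_fin_binomPMF_mul_eq_sum_range hm p 1

theorem sum_fin_binomPMF_mul_self {m r : ℕ} (hm : m ≤ r) (p : ℝ) :
    ∑ j : Fin (r + 1), binomPMF m p j * j = m * p :=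
  (sum_fin_binomPMF_mul_eq_sum_range hm p Nat.cast).trans (sum_range_binomPMF_mul_self m p)

theorem sum_range_binomPMF_mul_binomPMF {j r : ℕ} (hj : j ≤ r) (q c : ℝ) :
    ∑ m ∈ range (r + 1), binomPMF r q m * binomPMF m c j = binomPMF r (c * q) j := by
  obtain ⟨s, rfl⟩ := Nat.exists_eq_add_of_le hj
  have hterm : ∀ t, binomPMF (j + s) q (j + t) * binomPMF (j + t) c j
      = (j + s).choose j * (c * q) ^ j *
          (s.choose t * (q * (1 - c)) ^ t * (1 - q) ^ (s - t)) := by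
    intro t
    have hchoose : ((j + s).choose (j + t) * (j + t).choose j : ℝ)
        = (j + s).choose j * s.choose t := by
      have := Nat.choose_mul (n := j + s) (Nat.le_add_right j t)
      simp only [Nat.add_sub_cancel_left] at this
      exact_mod_cast this
    simp only [binomPMF, Nat.add_sub_cancel_left, Nat.add_sub_add_left, mul_pow]
    linear_combination (q ^ (j + t) * (1 - q) ^ (s - t) * c ^ j * (1 - c) ^ t) * hchoose
  rw [add_assoc, sum_range_add, sum_eq_zero fun m hm => by
      rw [binomPMF_eq_zero_of_lt c (by simpa using hm), mul_zero], zero_add,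
    sum_congr rfl fun t _ => hterm t, ← mul_sum]
  have hbinom : ∑ t ∈ range (s + 1), s.choose t * (q * (1 - c)) ^ t * (1 - q) ^ (s - t)
      = (1 - c * q) ^ s := by
    rw [show 1 - c * q = q * (1 - c) + (1 - q) by ring, add_pow]
    exact sum_congr rfl fun t _ => by ring
  rw [hbinom, binomPMF, Nat.add_sub_cancel_left]

theorem mul_sup_le_sum_prod_binomPMF_mul_sup {ι : Type*} [Fintype ι] [DecidableEq ι] {r : ℕ}
    {c : ℝ} (hc0 : 0 ≤ c) (hc1 : c ≤ 1) (g : ι → Fin (r + 1)) :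
    c * ((univ.sup fun i => (g i : ℕ) : ℕ) : ℝ) ≤
      ∑ f : ι → Fin (r + 1),
        (∏ i, binomPMF (g i) c (f i)) * ((univ.sup fun i => (f i : ℕ) : ℕ) : ℝ) := by
  rcases isEmpty_or_nonempty ι with _ | _
  · simp [univ_eq_empty]
  obtain ⟨i₀, -, hi₀⟩ := exists_mem_eq_sup univ univ_nonempty fun i => (g i : ℕ)
  calc c * ((univ.sup fun i => (g i : ℕ) : ℕ) : ℝ)
      = ∑ b : Fin (r + 1), binomPMF (g i₀) c b * b := by
        rw [sum_fin_binomPMF_mul_self (g i₀).is_le, hi₀, mul_comm]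
    _ ≤ _ := sum_mul_le_sum_prod_mul_sup _ (fun i b => binomPMF_nonneg hc0 hc1 _ _)
        (fun i _ => sum_fin_binomPMF (g i).is_le c) _

/-- Let `X ~ Bin(r, c·q)` and `X' ~ Bin(r, q)` for `c ∈ [0,1]`, and let `X₁, …, X_k` be
i.i.d. copies of `X` and `X'₁, …, X'_k` i.i.d. copies of `X'`.  Then
`E[maxᵢ Xᵢ] ≥ c · E[maxᵢ X'ᵢ]`. -/
theorem binomMaxExp_scaled (k r : ℕ) (c q : ℝ)
    (hc0 : 0 ≤ c) (hc1 : c ≤ 1) (hq0 : 0 ≤ q) (hq1 : q ≤ 1) :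
    c * binomMaxExp k r q ≤ binomMaxExp k r (c * q) := by
  set M : (Fin k → Fin (r + 1)) → ℝ := fun f => ((univ.sup fun i => (f i : ℕ) : ℕ) : ℝ)
  calc c * binomMaxExp k r q
      = ∑ g : Fin k → Fin (r + 1), (∏ i, binomPMF r q (g i)) * (c * M g) := by
        rw [binomMaxExp, mul_sum]
        exact sum_congr rfl fun g _ => by ring
    _ ≤ ∑ g : Fin k → Fin (r + 1),
          (∏ i, binomPMF r q (g i)) * ∑ f, (∏ i, binomPMF (g i) c (f i)) * M f :=
        sum_le_sum fun g _ => mul_le_mul_of_nonneg_left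
          (mul_sup_le_sum_prod_binomPMF_mul_sup hc0 hc1 g)
          (prod_nonneg fun i _ => binomPMF_nonneg hq0 hq1 _ _)
    _ = ∑ f, (∑ g : Fin k → Fin (r + 1),
          ∏ i, binomPMF r q (g i) * binomPMF (g i) c (f i)) * M f := by
        simp_rw [mul_sum, sum_mul, prod_mul_distrib, mul_assoc]
        exact sum_comm
    _ = binomMaxExp k r (c * q) := by
        refine sum_congr rfl fun f _ => ?_
        rw [← Fintype.prod_sum fun i (m : Fin (r + 1)) => binomPMF r q m * binomPMF m c (f i)]
        congr 1
        exact prod_congr rfl fun i _ => (Fin.sum_univ_eq_sum_range _ _).trans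
          (sum_range_binomPMF_mul_binomPMF (f i).is_le q c)
end

section
/- Let X1,...,Xk be i.i.d. PB(p_1,...,p_n) random variables, and let Y1,...,Yk be PB(p_1,...,p_n) random variables that may share underlying Bernoulli variables: there is a ground set Z of independent Bernoullis and subsets Z_j ⊆ Z with Y_j = Σ_{Z∈Z_j} Z, where each Y_j has marginal distribution PB(p_1,...,p_n). Then E[max_{j∈[k]} X_j] ≥ E[max_{j∈[k]} Y_j]. -/
/-!
Write `E[max_j N_j] = ∑_{t < n} (1 - P(N_j ≤ t for all j))`. For the independent copies the
probability that all of them are at most `t` is the product of their (common) distribution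
functions. For the shared sums the events `{Y_j ≤ t}` are decreasing in the ground Bernoullis, so
by the Harris (FKG) inequality for product measures on `{0,1}^ℓ` the probability of their
intersection is at least the product of the marginal probabilities, which are the same
distribution functions.
-/

/-- Weight of a Bernoulli(`p`) outcome: `p` if success, `1 - p` otherwise. -/
def bw (p : ℝ) (b : Bool) : ℝ := if b then p else 1 - p

open Finset

theorem bw_nonneg {p : ℝ} (hp : 0 ≤ p ∧ p ≤ 1) (b : Bool) : 0 ≤ bw p b := by
  cases b <;> simp [bw] <;> linarith [hp.1, hp.2]

theorem sum_prod_bw_eq_one {ι : Type*} [Fintype ι] [DecidableEq ι] (q : ι → ℝ) :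
    ∑ z : ι → Bool, ∏ i, bw (q i) (z i) = 1 := by
  rw [← Fintype.prod_sum]
  simp [bw]

theorem prod_bw_mul_prod_bw {ι : Type*} [Fintype ι] (q : ι → ℝ) (a b : ι → Bool) :
    (∏ i, bw (q i) (a i)) * ∏ i, bw (q i) (b i) =
      (∏ i, bw (q i) ((a ⊓ b) i)) * ∏ i, bw (q i) ((a ⊔ b) i) := by
  simp_rw [← prod_mul_distrib]
  refine prod_congr rfl fun i _ => ?_
  simp only [Pi.inf_apply, Pi.sup_apply]
  cases a i <;> cases b i <;> simp [bw, mul_comm]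

theorem fkg_prod {α ι : Type*} [DistribLattice α] [Fintype α] {μ : α → ℝ}
    (hμ₀ : 0 ≤ μ) (hμ₁ : ∑ a, μ a = 1) (hμ : ∀ a b, μ a * μ b ≤ μ (a ⊓ b) * μ (a ⊔ b))
    {f : ι → α → ℝ} (hf₀ : ∀ j, 0 ≤ f j) (hf : ∀ j, Monotone (f j)) (s : Finset ι) :
    ∏ j ∈ s, ∑ a, μ a * f j a ≤ ∑ a, μ a * ∏ j ∈ s, f j a := by
  classical
  induction s using Finset.induction_on with
  | empty => simp [hμ₁]
  | insert j s hj ih =>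
    have hmono : Monotone fun a => ∏ j ∈ s, f j a := fun a b hab =>
      prod_le_prod (fun j _ => hf₀ j a) (fun j _ => hf j hab)
    calc ∏ j ∈ insert j s, ∑ a, μ a * f j a
        = (∑ a, μ a * f j a) * ∏ j ∈ s, ∑ a, μ a * f j a := prod_insert hj
      _ ≤ (∑ a, μ a * f j a) * ∑ a, μ a * ∏ j ∈ s, f j a := by
        gcongr
        exact sum_nonneg fun a _ => mul_nonneg (hμ₀ a) (hf₀ j a)
      _ ≤ (∑ a, μ a) * ∑ a, μ a * (f j a * ∏ j ∈ s, f j a) :=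
        fkg (f j) _ μ hμ₀ (hf₀ j) (fun a => prod_nonneg fun j _ => hf₀ j a) (hf j) hmono hμ
      _ = ∑ a, μ a * ∏ j ∈ insert j s, f j a := by simp_rw [hμ₁, one_mul, prod_insert hj]

theorem harris_prod_bw {ι κ : Type*} [Fintype ι] [DecidableEq ι] {q : ι → ℝ}
    (hq : ∀ i, 0 ≤ q i ∧ q i ≤ 1) {f : κ → (ι → Bool) → ℝ} (hf₀ : ∀ j, 0 ≤ f j)
    (hf : ∀ j, Antitone (f j)) (s : Finset κ) :
    ∏ j ∈ s, ∑ z, (∏ i, bw (q i) (z i)) * f j z ≤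
      ∑ z, (∏ i, bw (q i) (z i)) * ∏ j ∈ s, f j z :=
  -- antitone functions are monotone on the order dual, where the product weight still
  -- satisfies the FKG lattice condition (with equality)
  fkg_prod (α := (ι → Bool)ᵒᵈ) (μ := fun z => ∏ i, bw (q i) (OrderDual.ofDual z i))
    (fun _ => prod_nonneg fun i _ => bw_nonneg (hq i) _) (sum_prod_bw_eq_one q)
    (fun a b => (prod_bw_mul_prod_bw q a b).trans_le (mul_comm _ _).le)
    hf₀ (fun j => (hf j).dual_left) s

theorem sum_prod_bw_mul_comp_embedding {ι κ : Type*} [Fintype ι] [Fintype κ] [DecidableEq ι]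
    [DecidableEq κ] (q : ι → ℝ) (g : κ ↪ ι) (F : (κ → Bool) → ℝ) :
    ∑ z : ι → Bool, (∏ i, bw (q i) (z i)) * F (z ∘ g) =
      ∑ x : κ → Bool, (∏ a, bw (q (g a)) (x a)) * F x := by
  classical
  -- split the coordinates into the image of `g` and its complement, whose weights sum to `1`
  let e : κ ⊕ ↥(Set.range g)ᶜ ≃ ι :=
    (Equiv.sumCongr (Equiv.ofInjective g g.injective) (Equiv.refl _)).trans
      (Equiv.Set.sumCompl (Set.range g))
  let split : (ι → Bool) ≃ (κ → Bool) × (↥(Set.range g)ᶜ → Bool) :=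
    (Equiv.arrowCongr e (Equiv.refl Bool)).symm.trans (Equiv.sumArrowEquivProdArrow _ _ _)
  have hsplit : ∀ x y s, split.symm (x, y) (e s) = Sum.elim x y s := by
    intro x y s; simp [split]; rfl
  have hg : ∀ a, e (.inl a) = g a := fun a => rfl
  have hcomp : ∀ x y, split.symm (x, y) ∘ g = x := fun x y =>
    funext fun a => by rw [Function.comp_apply, ← hg, hsplit]; rfl
  rw [← Equiv.sum_comp split.symm, Fintype.sum_prod_type]
  refine sum_congr rfl fun x _ => ?_
  simp_rw [← Equiv.prod_comp e, Fintype.prod_sum_type, hsplit, hcomp, Sum.elim_inl,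
    Sum.elim_inr, hg, mul_right_comm _ _ (F x), ← mul_sum, sum_prod_bw_eq_one, mul_one]

theorem sum_prod_prod_bw_mul_prod {ι κ : Type*} [Fintype ι] [Fintype κ] [DecidableEq ι]
    [DecidableEq κ] (q : ι → ℝ) (f : κ → (ι → Bool) → ℝ) :
    ∑ x : κ → ι → Bool, (∏ j, ∏ i, bw (q i) (x j i)) * ∏ j, f j (x j) =
      ∏ j, ∑ y, (∏ i, bw (q i) (y i)) * f j y := by
  simp_rw [← prod_mul_distrib]
  exact (Fintype.prod_sum fun j y => (∏ i, bw (q i) (y i)) * f j y).symm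

theorem cast_sup_eq_sum_range {ι : Type*} [Fintype ι] (N : ι → ℕ) {n : ℕ}
    (hN : ∀ j, N j ≤ n) :
    ((univ.sup N : ℕ) : ℝ) = ∑ t ∈ range n, (1 - ∏ j, if N j ≤ t then (1 : ℝ) else 0) := by
  have hlevel : ∀ t, 1 - ∏ j, (if N j ≤ t then (1 : ℝ) else 0) =
      if t < univ.sup N then 1 else 0 := by
    intro t
    have hall : (∀ j ∈ univ, N j ≤ t) ↔ ¬t < univ.sup N := by
      rw [not_lt, Finset.sup_le_iff]
    rw [prod_boole, if_congr hall rfl rfl]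
    split_ifs <;> norm_num
  have hrange : {t ∈ range n | t < univ.sup N} = range (univ.sup N) := by
    have := Finset.sup_le fun j (_ : j ∈ univ) => hN j
    ext t; simp only [mem_filter, mem_range]; omega
  rw [sum_congr rfl fun t _ => hlevel t, sum_boole, hrange, card_range]

theorem sum_mul_cast_sup_eq_sum_range {Ω ι : Type*} [Fintype Ω] [Fintype ι] {μ : Ω → ℝ}
    (hμ : ∑ ω, μ ω = 1) (N : ι → Ω → ℕ) {n : ℕ} (hN : ∀ j ω, N j ω ≤ n) :
    ∑ ω, μ ω * ((univ.sup fun j => N j ω : ℕ) : ℝ) =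
      ∑ t ∈ range n, (1 - ∑ ω, μ ω * ∏ j, if N j ω ≤ t then (1 : ℝ) else 0) := by
  simp_rw [fun ω => cast_sup_eq_sum_range (N · ω) (hN · ω), mul_sum, mul_sub, mul_one]
  rw [sum_comm]
  simp_rw [sum_sub_distrib, hμ]

theorem sum_boole_le_card {α : Type*} [Fintype α] (x : α → Bool) :
    ∑ i, (if x i then 1 else 0) ≤ Fintype.card α := by
  rw [sum_boole]
  exact card_filter_le _ _

theorem monotone_sum_boole {α : Type*} [Fintype α] :
    Monotone fun x : α → Bool => ∑ i, if x i then (1 : ℕ) else 0 := fun x y h =>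
  sum_le_sum fun i _ => by have := h i; revert this; cases x i <;> cases y i <;> simp

theorem Monotone.antitone_ite_le {α : Type*} [Preorder α] {f : α → ℕ} (hf : Monotone f)
    (t : ℕ) :
    Antitone fun a => if f a ≤ t then (1 : ℝ) else 0 := by
  intro a b hab
  by_cases hb : f b ≤ t
  · simp [hb, (hf hab).trans hb]
  · simp only [if_neg hb]
    split_ifs <;> norm_num

theorem exp_max_independent_better_general (n k ℓ : ℕ) (p : Fin n → ℝ) (ρ : Fin ℓ → ℝ)
    (hρ : ∀ i, 0 ≤ ρ i ∧ ρ i ≤ 1)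
    (Zs : Fin k → Finset (Fin ℓ))
    (hmarg : ∀ j, ∃ g : Fin n → Fin ℓ, Function.Injective g ∧
      Finset.univ.image g = Zs j ∧ ∀ i, ρ (g i) = p i) :
    (∑ z : Fin ℓ → Bool,
        (∏ i, bw (ρ i) (z i)) *
          (((Finset.univ.sup fun j : Fin k =>
            ∑ i ∈ Zs j, if z i then (1 : ℕ) else 0 : ℕ)) : ℝ)) ≤
    ∑ x : Fin k → Fin n → Bool,
      (∏ j, ∏ i, bw (p i) (x j i)) *
        (((Finset.univ.sup fun j : Fin k =>
          ∑ i : Fin n, if x j i then (1 : ℕ) else 0 : ℕ)) : ℝ) := by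
  choose g hg_inj hg_image hg_prob using hmarg
  set T : (Fin n → Bool) → ℕ := fun x => ∑ i, if x i then 1 else 0
  set below : ℕ → (Fin n → Bool) → ℝ := fun t x => if T x ≤ t then 1 else 0
  have hT : ∀ x, T x ≤ n := fun x => (sum_boole_le_card x).trans_eq (Fintype.card_fin n)
  have hS : ∀ j z, ∑ i ∈ Zs j, (if z i then 1 else 0) = T (z ∘ g j) := fun j z => by
    rw [← hg_image j, sum_image fun a _ b _ h => hg_inj j h]; rfl
  have hmarginal : ∀ j t, ∑ z, (∏ i, bw (ρ i) (z i)) * below t (z ∘ g j) =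
      ∑ x, (∏ i, bw (p i) (x i)) * below t x := fun j t => by
    simpa only [Function.Embedding.coeFn_mk, hg_prob] using
      sum_prod_bw_mul_comp_embedding ρ ⟨g j, hg_inj j⟩ (below t)
  have hdecreasing : ∀ t j, Antitone fun z : Fin ℓ → Bool => below t (z ∘ g j) := fun t j =>
    (monotone_sum_boole.comp fun _ _ h i => Pi.le_def.1 h (g j i)).antitone_ite_le t
  have hweight : ∑ x : Fin k → Fin n → Bool, ∏ j, ∏ i, bw (p i) (x j i) = 1 := by
    simpa [sum_prod_bw_eq_one] using sum_prod_prod_bw_mul_prod p fun (_ : Fin k) _ => (1 : ℝ)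
  simp_rw [hS]
  rw [sum_mul_cast_sup_eq_sum_range (sum_prod_bw_eq_one ρ) _ fun _ _ => hT _,
    sum_mul_cast_sup_eq_sum_range hweight _ fun _ x => hT (x _)]
  gcongr with t
  calc ∑ x : Fin k → Fin n → Bool, (∏ j, ∏ i, bw (p i) (x j i)) * ∏ j, below t (x j)
      = ∏ j : Fin k, ∑ z, (∏ i, bw (ρ i) (z i)) * below t (z ∘ g j) := by
        simp_rw [sum_prod_prod_bw_mul_prod, hmarginal]
    _ ≤ _ := harris_prod_bw hρ (fun _ _ => by positivity) (hdecreasing t) univ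

/-- Let `X₁, …, X_k` be i.i.d. `PB(p₁, …, pₙ)` random variables, and let `Y₁, …, Y_k` be
`PB(p₁, …, pₙ)` random variables that may share underlying Bernoulli variables: there is
a ground set of independent Bernoullis with probabilities `ρ₁, …, ρ_ℓ` and subsets
`Zⱼ ⊆ [ℓ]` with `Yⱼ = ∑_{i ∈ Zⱼ} (i-th Bernoulli)`, where each `Yⱼ` has marginal
distribution `PB(p₁, …, pₙ)` (witnessed by a probability-preserving bijection
`[n] → Zⱼ`).  Then `E[max_{j ∈ [k]} Xⱼ] ≥ E[max_{j ∈ [k]} Yⱼ]`. -/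
theorem exp_max_independent_better (n k ℓ : ℕ) (p : Fin n → ℝ) (ρ : Fin ℓ → ℝ)
    (hp : ∀ i, 0 ≤ p i ∧ p i ≤ 1) (hρ : ∀ i, 0 ≤ ρ i ∧ ρ i ≤ 1)
    (Zs : Fin k → Finset (Fin ℓ))
    (hmarg : ∀ j, ∃ g : Fin n → Fin ℓ, Function.Injective g ∧
      Finset.univ.image g = Zs j ∧ ∀ i, ρ (g i) = p i) :
    (∑ z : Fin ℓ → Bool,
        (∏ i, bw (ρ i) (z i)) *
          (((Finset.univ.sup fun j : Fin k =>
            ∑ i ∈ Zs j, if z i then (1 : ℕ) else 0 : ℕ)) : ℝ)) ≤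
    ∑ x : Fin k → Fin n → Bool,
      (∏ j, ∏ i, bw (p i) (x j i)) *
        (((Finset.univ.sup fun j : Fin k =>
          ∑ i : Fin n, if x j i then (1 : ℕ) else 0 : ℕ)) : ℝ) :=
  exp_max_independent_better_general n k ℓ p ρ hρ Zs hmarg
end

section
/- Let M = (E, I) be a matroid, {X_e} independent {0,1}-valued random variables with probability vector p lying in the matroid polytope P(M), and S = {e : X_e = 1}. Then E[rank(S)] ≥ (1 - 1/e) · E[|S|]. -/
open scoped Classical

/-- A matroid on a finite ground set, given by its independent sets. -/
structure FinMatroid (α : Type*) [DecidableEq α] [Fintype α] where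
  Indep : Finset α → Prop
  empty_indep : Indep ∅
  subset_indep : ∀ ⦃I J : Finset α⦄, Indep J → I ⊆ J → Indep I
  exchange : ∀ ⦃I J : Finset α⦄, Indep I → Indep J → I.card < J.card →
    ∃ e ∈ J \ I, Indep (insert e I)

/-- The rank of a set: the size of a largest independent subset. -/
noncomputable def FinMatroid.rank {α : Type*} [DecidableEq α] [Fintype α]
    (M : FinMatroid α) (S : Finset α) : ℕ :=
  (S.powerset.filter (fun I => M.Indep I)).sup Finset.card

/-- Probability that the random set of active elements (each element `e` active
independently with probability `p e`) equals `A`. -/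
noncomputable def subsetWeight {α : Type*} [DecidableEq α] [Fintype α]
    (p : α → ℝ) (A : Finset α) : ℝ :=
  (∏ e ∈ A, p e) * ∏ e ∈ Finset.univ \ A, (1 - p e)

/-- `E[rank(S)]` for the random set `S` of active elements. -/
noncomputable def expRank {α : Type*} [DecidableEq α] [Fintype α]
    (M : FinMatroid α) (p : α → ℝ) : ℝ :=
  ∑ A : Finset α, subsetWeight p A * (M.rank A : ℝ)

/-
Along the ray `t ↦ t • p`, the expected rank `F t` of the random set sampled with marginals
`t • p` satisfies `F' ≥ ∑ₑ pₑ - F`. Indeed `F'(t)` is the expectation of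
`∑ₑ pₑ (r(S + e) - r(S - e))`, and for each fixed `S` the elements that do not raise the rank of
`S` span no more than `S`, so by the polytope constraint their `p`-mass is at most `r(S)`; every
other element contributes at least `pₑ`. Hence `eᵗ (∑ₑ pₑ - F t)` is antitone on `[0, 1]`, which
gives `F 1 ≥ (1 - 1/e) ∑ₑ pₑ`.
-/

open Finset

namespace FinMatroid

variable {α : Type*} [DecidableEq α] [Fintype α] (M : FinMatroid α)

theorem exists_indep_subset_card_eq_rank (S : Finset α) :
    ∃ I ⊆ S, M.Indep I ∧ I.card = M.rank S := by
  obtain ⟨I, hI, hsup⟩ := exists_mem_eq_sup (S.powerset.filter M.Indep)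
    ⟨∅, by simp [M.empty_indep]⟩ card
  rw [mem_filter, mem_powerset] at hI
  exact ⟨I, hI.1, hI.2, hsup.symm⟩

theorem card_le_rank {I S : Finset α} (hI : M.Indep I) (hIS : I ⊆ S) : I.card ≤ M.rank S :=
  le_sup (f := card) (by simp [hIS, hI])

theorem rank_le_card (S : Finset α) : M.rank S ≤ S.card :=
  Finset.sup_le fun _ hI => card_le_card (mem_powerset.1 (mem_filter.1 hI).1)

theorem rank_empty : M.rank ∅ = 0 :=
  Nat.le_zero.1 (M.rank_le_card ∅)

theorem rank_mono {S T : Finset α} (h : S ⊆ T) : M.rank S ≤ M.rank T := by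
  obtain ⟨I, hIS, hI, hcard⟩ := M.exists_indep_subset_card_eq_rank S
  exact hcard ▸ M.card_le_rank hI (hIS.trans h)

theorem rank_union_eq_of_forall_rank_insert_eq {A C : Finset α}
    (h : ∀ e ∈ C, M.rank (insert e A) = M.rank A) : M.rank (A ∪ C) = M.rank A := by
  refine le_antisymm (not_lt.1 fun hlt => ?_) (M.rank_mono subset_union_left)
  obtain ⟨I, hIA, hI, hIcard⟩ := M.exists_indep_subset_card_eq_rank A
  obtain ⟨J, hJ, hJind, hJcard⟩ := M.exists_indep_subset_card_eq_rank (A ∪ C)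
  obtain ⟨e, he, hIe⟩ := M.exchange hI hJind (by omega)
  rw [mem_sdiff] at he
  have hrank : I.card + 1 ≤ M.rank (insert e A) := by
    rw [← card_insert_of_notMem he.2]
    exact M.card_le_rank hIe (insert_subset_insert e hIA)
  rcases mem_union.1 (hJ he.1) with hA | hC
  · rw [insert_eq_self.2 hA] at hrank; omega
  · rw [h e hC] at hrank; omega

theorem sum_sub_rank_le_sum_mul_rank_insert_sub_rank_erase {p : α → ℝ} (hp0 : ∀ e, 0 ≤ p e)
    (hpoly : ∀ U : Finset α, ∑ e ∈ U, p e ≤ (M.rank U : ℝ)) (A : Finset α) :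
    ∑ e, p e - M.rank A ≤ ∑ e, p e * ((M.rank (insert e A) : ℝ) - M.rank (A.erase e)) := by
  set T := univ.filter fun e => M.rank A < M.rank (insert e A)
  have hTc : ∑ e ∈ Tᶜ, p e ≤ M.rank A := by
    refine (hpoly _).trans (Nat.cast_le.2 ?_)
    calc M.rank Tᶜ ≤ M.rank (A ∪ Tᶜ) := M.rank_mono subset_union_right
      _ = M.rank A := M.rank_union_eq_of_forall_rank_insert_eq fun e he =>
          le_antisymm (by simpa [T] using mem_compl.1 he) (M.rank_mono (subset_insert e A))
  have hT : ∑ e ∈ T, p e ≤ ∑ e, p e * ((M.rank (insert e A) : ℝ) - M.rank (A.erase e)) := by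
    rw [sum_filter]
    refine sum_le_sum fun e _ => ?_
    have herase : M.rank (A.erase e) ≤ M.rank A := M.rank_mono (erase_subset e A)
    have hinsert : M.rank A ≤ M.rank (insert e A) := M.rank_mono (subset_insert e A)
    split_ifs with hlt
    · refine le_mul_of_one_le_right (hp0 e) ?_
      rw [le_sub_iff_add_le']
      exact_mod_cast (by omega : M.rank (A.erase e) + 1 ≤ M.rank (insert e A))
    · exact mul_nonneg (hp0 e) (sub_nonneg.2 (by exact_mod_cast herase.trans hinsert))
  linarith [sum_add_sum_compl T p]

end FinMatroid

section MultilinearExtension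

variable {α : Type*} [DecidableEq α] [Fintype α]

noncomputable def multilinearExt (f : Finset α → ℝ) (x : α → ℝ) : ℝ :=
  ∑ A : Finset α, subsetWeight x A * f A

noncomputable def subsetWeightErase (x : α → ℝ) (e : α) (A : Finset α) : ℝ :=
  ∏ j ∈ univ.erase e, if j ∈ A then x j else 1 - x j

theorem subsetWeight_eq_prod_ite (x : α → ℝ) (A : Finset α) :
    subsetWeight x A = ∏ e, if e ∈ A then x e else 1 - x e := by
  rw [subsetWeight, prod_ite, filter_mem_eq_inter, univ_inter, ← compl_eq_univ_sdiff,
    filter_not, filter_mem_eq_inter, univ_inter, compl_eq_univ_sdiff]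

theorem subsetWeight_eq_mul_subsetWeightErase (x : α → ℝ) (e : α) (A : Finset α) :
    subsetWeight x A = (if e ∈ A then x e else 1 - x e) * subsetWeightErase x e A := by
  rw [subsetWeight_eq_prod_ite, subsetWeightErase]
  exact (mul_prod_erase univ (fun j => if j ∈ A then x j else 1 - x j) (mem_univ e)).symm

theorem subsetWeightErase_insert (x : α → ℝ) (e : α) (A : Finset α) :
    subsetWeightErase x e (insert e A) = subsetWeightErase x e A :=
  prod_congr rfl fun j hj => by simp [(mem_erase.1 hj).1]

theorem sum_subsetWeight (x : α → ℝ) : ∑ A : Finset α, subsetWeight x A = 1 := by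
  simp_rw [subsetWeight, ← powerset_univ, ← prod_add, add_sub_cancel, prod_const_one]

theorem subsetWeight_nonneg {x : α → ℝ} (hx0 : ∀ e, 0 ≤ x e) (hx1 : ∀ e, x e ≤ 1)
    (A : Finset α) : 0 ≤ subsetWeight x A :=
  mul_nonneg (prod_nonneg fun e _ => hx0 e) (prod_nonneg fun e _ => sub_nonneg.2 (hx1 e))

theorem sum_finset_eq_sum_powerset_erase {β : Type*} [AddCommMonoid β] (e : α)
    (f : Finset α → β) :
    ∑ A : Finset α, f A = ∑ B ∈ (univ.erase e).powerset, (f B + f (insert e B)) := by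
  conv_lhs => rw [← powerset_univ, ← insert_erase (mem_univ e)]
  rw [sum_powerset_insert (notMem_erase e univ), sum_add_distrib]

/-- Both sides equal `∑ B ∌ e, subsetWeightErase x e B * (f (insert e B) - f B)`. -/
theorem sum_subsetWeight_mul_sub_eq (f : Finset α → ℝ) (x : α → ℝ) (e : α) :
    ∑ A : Finset α, subsetWeight x A * (f (insert e A) - f (A.erase e)) =
      ∑ A : Finset α, subsetWeightErase x e A * ((if e ∈ A then 1 else -1) * f A) := by
  rw [sum_finset_eq_sum_powerset_erase e, sum_finset_eq_sum_powerset_erase e]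
  refine sum_congr rfl fun B hB => ?_
  have heB : e ∉ B := fun h => notMem_erase e univ (mem_powerset.1 hB h)
  simp only [subsetWeight_eq_mul_subsetWeightErase x e, subsetWeightErase_insert, mem_insert_self,
    if_true, if_neg heB, erase_insert heB, erase_eq_of_notMem heB, insert_idem]
  ring

theorem hasDerivAt_subsetWeight_smul (p : α → ℝ) (A : Finset α) (t : ℝ) :
    HasDerivAt (fun t : ℝ => subsetWeight (t • p) A)
      (∑ e, subsetWeightErase (t • p) e A * ((if e ∈ A then 1 else -1) * p e)) t := by
  simp_rw [subsetWeight_eq_prod_ite]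
  have hfactor : ∀ e ∈ (univ : Finset α), HasDerivAt
      (fun t : ℝ => if e ∈ A then (t • p) e else 1 - (t • p) e)
      ((if e ∈ A then 1 else -1) * p e) t := by
    intro e _
    split_ifs
    · simpa using hasDerivAt_mul_const (p e)
    · simpa using (hasDerivAt_mul_const (p e)).const_sub 1
  simpa [subsetWeightErase] using HasDerivAt.fun_finsetProd hfactor

theorem hasDerivAt_multilinearExt_smul (f : Finset α → ℝ) (p : α → ℝ) (t : ℝ) :
    HasDerivAt (fun t : ℝ => multilinearExt f (t • p))
      (multilinearExt (fun A => ∑ e, p e * (f (insert e A) - f (A.erase e))) (t • p)) t := by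
  refine (HasDerivAt.fun_sum (u := univ) fun A _ =>
    (hasDerivAt_subsetWeight_smul p A t).mul_const (f A)).congr_deriv (Eq.symm ?_)
  calc multilinearExt (fun A => ∑ e, p e * (f (insert e A) - f (A.erase e))) (t • p)
      = ∑ e, p e * ∑ A : Finset α, subsetWeight (t • p) A * (f (insert e A) - f (A.erase e)) := by
        simp_rw [multilinearExt, mul_sum]
        rw [sum_comm]
        exact sum_congr rfl fun _ _ => sum_congr rfl fun _ _ => by ring
    _ = ∑ e, p e * ∑ A : Finset α,
          subsetWeightErase (t • p) e A * ((if e ∈ A then 1 else -1) * f A) := by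
        simp_rw [sum_subsetWeight_mul_sub_eq]
    _ = _ := by
        simp_rw [mul_sum, sum_mul]
        rw [sum_comm]
        exact sum_congr rfl fun _ _ => sum_congr rfl fun _ _ => by ring

theorem multilinearExt_zero (f : Finset α → ℝ) : multilinearExt f 0 = f ∅ := by
  rw [multilinearExt, sum_eq_single_of_mem ∅ (mem_univ _)]
  · simp [subsetWeight]
  · intro A _ hA
    obtain ⟨e, he⟩ := nonempty_iff_ne_empty.2 hA
    simp [subsetWeight, prod_eq_zero he]

theorem sub_multilinearExt (c : ℝ) (f : Finset α → ℝ) (x : α → ℝ) :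
    c - multilinearExt f x = multilinearExt (fun A => c - f A) x := by
  simp_rw [multilinearExt, mul_sub, sum_sub_distrib, ← sum_mul, sum_subsetWeight, one_mul]

theorem multilinearExt_mono {f g : Finset α → ℝ} (hfg : ∀ A, f A ≤ g A) {x : α → ℝ}
    (hx0 : ∀ e, 0 ≤ x e) (hx1 : ∀ e, x e ≤ 1) : multilinearExt f x ≤ multilinearExt g x :=
  sum_le_sum fun A _ => mul_le_mul_of_nonneg_left (hfg A) (subsetWeight_nonneg hx0 hx1 A)

end MultilinearExtension

theorem one_sub_inv_exp_mul_le_of_sub_le_deriv {F F' : ℝ → ℝ} {c : ℝ}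
    (hF : ∀ t, HasDerivAt F (F' t) t) (hF' : ∀ t ∈ Set.Ioo (0 : ℝ) 1, c - F t ≤ F' t)
    (hF0 : F 0 = 0) : (1 - 1 / Real.exp 1) * c ≤ F 1 := by
  have hG : ∀ t, HasDerivAt (fun t => Real.exp t * (c - F t))
      (Real.exp t * (c - F t - F' t)) t := fun t =>
    ((Real.hasDerivAt_exp t).mul ((hF t).const_sub c)).congr_deriv (by ring)
  have hanti : AntitoneOn (fun t => Real.exp t * (c - F t)) (Set.Icc 0 1) := by
    refine antitoneOn_of_deriv_nonpos (convex_Icc 0 1)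
      (HasDerivAt.continuousOn fun t _ => hG t)
      (fun t _ => (hG t).differentiableAt.differentiableWithinAt) fun t ht => ?_
    rw [interior_Icc] at ht
    rw [(hG t).deriv]
    exact mul_nonpos_of_nonneg_of_nonpos (Real.exp_pos t).le (by linarith [hF' t ht])
  have h01 := hanti (Set.left_mem_Icc.2 zero_le_one) (Set.right_mem_Icc.2 zero_le_one) zero_le_one
  simp only [Real.exp_zero, hF0, one_mul, sub_zero] at h01
  have hF1 : c - F 1 ≤ c / Real.exp 1 := by
    rw [le_div_iff₀ (Real.exp_pos 1)]
    linarith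
  calc (1 - 1 / Real.exp 1) * c = c - c / Real.exp 1 := by ring
    _ ≤ F 1 := by linarith

/-- Correlation-gap guarantee: if `{X_e}` are independent `{0,1}` random variables whose
probability vector `p` lies in the matroid polytope, and `S = {e : X_e = 1}`, then
`E[rank(S)] ≥ (1 - 1/e) · E[|S|]` (note `E[|S|] = ∑ₑ pₑ`). -/
theorem expRank_ge_correlation_gap {α : Type*} [DecidableEq α] [Fintype α]
    (M : FinMatroid α) (p : α → ℝ) (hp0 : ∀ e, 0 ≤ p e)
    (hpoly : ∀ U : Finset α, ∑ e ∈ U, p e ≤ (M.rank U : ℝ)) :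
    (1 - 1 / Real.exp 1) * (∑ e : α, p e) ≤ expRank M p := by
  have hp1 : ∀ e, p e ≤ 1 := fun e => by
    simpa using (hpoly {e}).trans (Nat.cast_le.2 (M.rank_le_card {e}))
  have hmarginal := M.sum_sub_rank_le_sum_mul_rank_insert_sub_rank_erase hp0 hpoly
  have hexpRank : expRank M p = multilinearExt (fun A => (M.rank A : ℝ)) ((1 : ℝ) • p) := by
    rw [one_smul]; rfl
  rw [hexpRank]
  refine one_sub_inv_exp_mul_le_of_sub_le_deriv
    (hasDerivAt_multilinearExt_smul (fun A => (M.rank A : ℝ)) p) (fun t ht => ?_) ?_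
  · rw [sub_multilinearExt]
    exact multilinearExt_mono hmarginal (fun e => mul_nonneg ht.1.le (hp0 e))
      fun e => mul_le_one₀ ht.2.le (hp0 e) (hp1 e)
  · simp [multilinearExt_zero, M.rank_empty]
end
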